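/- Let p be a prime, r ∈ {1,…,p−1}, and let u be a binary word starting with 1. Then the pair (u 0^{|u|} 1^r 0, u 0^{|u|} 1 0) satisfies condition (⋆)_r: (u0^{|u|}1^r0 choose u0^{|u|}10) ≡ r (mod p), and appending either letter 0 or 1 to the second word makes the binomial coefficient zero. -/

import Mathlib

/-!
When two words contain the same number of letters `a`, every occurrence of the second in the first
matches their `a`s one-to-one, so the binomial coefficient factorises over the blocks between
consecutive `a`s. For the two words of the theorem (with `a = 0`) the blocks agree except for the
last block of `1`s, where `1^r` against `1` contributes `r`; the padding `0^{|u|}` keeps that block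
separate from any trailing `1`s of `u`. Appending `0` to the second word exceeds the number of `0`s
of the first; appending `1` creates a block of `1`s after the last `0`, which the first word lacks.
-/

/-- The binomial coefficient of words: the number of occurrences of the second
word as a scattered subsequence of the first. -/
def wb {A : Type*} [DecidableEq A] : List A → List A → ℕ
  | _, [] => 1
  | [], _ :: _ => 0
  | a :: u, b :: v => wb u (b :: v) + (if a = b then wb u v else 0)

open List

section

variable {A : Type*} [DecidableEq A]

@[simp]
lemma wb_nil_right (s : List A) : wb s [] = 1 := by
  cases s <;> rfl

@[simp]
lemma wb_nil_cons (b : A) (t : List A) : wb [] (b :: t) = 0 := rfl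

lemma wb_cons_cons (a b : A) (s t : List A) :
    wb (a :: s) (b :: t) = wb s (b :: t) + if a = b then wb s t else 0 := rfl

lemma wb_eq_zero_of_count_lt {a : A} {s t : List A} (h : s.count a < t.count a) :
    wb s t = 0 := by
  induction s generalizing t with
  | nil => cases t <;> simp_all
  | cons c s ih =>
    cases t with
    | nil => simp at h
    | cons b t =>
      rw [wb_cons_cons, ih (by grind)]
      split_ifs
      · rw [ih (by grind)]
      · rfl

@[simp]
lemma wb_self (s : List A) : wb s s = 1 := by
  induction s with
  | nil => rfl
  | cons c s ih =>
    simp [wb_cons_cons, wb_eq_zero_of_count_lt (a := c) (s := s) (t := c :: s) (by simp), ih]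

lemma wb_replicate_replicate (a : A) (n k : ℕ) :
    wb (replicate n a) (replicate k a) = n.choose k := by
  induction n generalizing k with
  | zero => cases k <;> rfl
  | succ n ih =>
    cases k with
    | zero => simp
    | succ k =>
      rw [replicate_succ, replicate_succ, wb_cons_cons, if_pos rfl, ← replicate_succ, ih, ih,
        Nat.choose_succ_succ', add_comm]

lemma wb_append_cons_append_cons {a : A} {x y s t : List A} (hxy : x.count a = y.count a)
    (hst : s.count a = t.count a) : wb (x ++ a :: s) (y ++ a :: t) = wb x y * wb s t := by
  induction x generalizing y with
  | nil =>
    cases y with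
    | nil =>
      simp [wb_cons_cons, wb_eq_zero_of_count_lt (a := a) (s := s) (t := a :: t) (by simp [hst])]
    | cons d y =>
      have had : a ≠ d := by rintro rfl; simp at hxy
      simp only [nil_append, cons_append, wb_cons_cons, if_neg had, wb_nil_cons, zero_mul]
      exact wb_eq_zero_of_count_lt (a := a) (by grind)
  | cons c x ih =>
    cases y with
    | nil =>
      have hca : c ≠ a := by rintro rfl; simp at hxy
      rw [cons_append, nil_append, wb_cons_cons, if_neg hca, wb_nil_right, one_mul]
      simpa using ih (y := []) (by simpa [hca] using hxy)
    | cons d y =>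
      simp only [cons_append, wb_cons_cons, add_mul, ite_mul, zero_mul]
      congr 1
      · by_cases hx : x.count a = (d :: y).count a
        · exact ih hx
        · have hlt : x.count a < (d :: y).count a := by grind
          rw [wb_eq_zero_of_count_lt hlt, zero_mul]
          exact wb_eq_zero_of_count_lt (a := a) (by grind)
      · split_ifs
        · exact ih (by grind)
        · rfl

lemma wb_append_cons_append_cons_self {a : A} (w : List A) {s t : List A}
    (hst : s.count a = t.count a) : wb (w ++ a :: s) (w ++ a :: t) = wb s t := by
  simp [wb_append_cons_append_cons rfl hst]

end

lemma wb_padded_replicate_true (u : List Bool) (r : ℕ) :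
    wb (u ++ replicate u.length false ++ replicate r true ++ [false])
      (u ++ replicate u.length false ++ [true, false]) = r := by
  have hblock : wb (replicate r true ++ [false]) [true, false] = r := by
    have h := wb_append_cons_append_cons (a := false) (x := replicate r true)
      (y := replicate 1 true) (s := []) (t := []) (by simp [count_replicate]) rfl
    rwa [wb_replicate_replicate, Nat.choose_one_right, wb_self, mul_one] at h
  cases u with
  | nil => simpa using hblock
  | cons b v =>
    have hw : ∀ z, b :: v ++ replicate (b :: v).length false ++ z
        = (b :: v ++ replicate v.length false) ++ false :: z := by simp [replicate_succ']
    rw [append_assoc _ (replicate r true), hw, hw,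
      wb_append_cons_append_cons_self _ (by simp [count_replicate]), hblock]

theorem stmt_18_general (p : ℕ) (r : ℕ) (hr2 : r ≤ p - 1)
    (u : List Bool) :
    wb (u ++ List.replicate u.length false ++ List.replicate r true ++ [false])
       (u ++ List.replicate u.length false ++ [true, false]) % p = r ∧
    wb (u ++ List.replicate u.length false ++ List.replicate r true ++ [false])
       ((u ++ List.replicate u.length false ++ [true, false]) ++ [false]) = 0 ∧
    wb (u ++ List.replicate u.length false ++ List.replicate r true ++ [false])
       ((u ++ List.replicate u.length false ++ [true, false]) ++ [true]) = 0 := by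
  set w := u ++ replicate u.length false
  refine ⟨?_, ?_, ?_⟩
  · rw [wb_padded_replicate_true]
    rcases p.eq_zero_or_pos with rfl | hp
    · exact Nat.mod_zero r
    · exact Nat.mod_eq_of_lt (by omega)
  · exact wb_eq_zero_of_count_lt (a := false) (by simp [count_replicate])
  · have h := wb_append_cons_append_cons (a := false) (x := w ++ replicate r true)
      (y := w ++ [true]) (s := []) (t := [true]) (by simp [count_replicate]) rfl
    simpa [append_assoc] using h

theorem stmt_18 (p : ℕ) (hp : p.Prime) (r : ℕ) (hr1 : 1 ≤ r) (hr2 : r ≤ p - 1)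
    (u : List Bool) (hu : ∃ u' : List Bool, u = true :: u') :
    wb (u ++ List.replicate u.length false ++ List.replicate r true ++ [false])
       (u ++ List.replicate u.length false ++ [true, false]) % p = r ∧
    wb (u ++ List.replicate u.length false ++ List.replicate r true ++ [false])
       ((u ++ List.replicate u.length false ++ [true, false]) ++ [false]) = 0 ∧
    wb (u ++ List.replicate u.length false ++ List.replicate r true ++ [false])
       ((u ++ List.replicate u.length false ++ [true, false]) ++ [true]) = 0 :=
  stmt_18_general p r hr2 u
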